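/- Let C be a category with all finite limits and colimits which has splitting coproducts and disjoint coproducts. In the generalized cocore model structure, whose weak equivalences are W = {f : A ⟶ B | there exists some morphism B ⟶ A} and whose fibrations are Fib = (split monomorphisms).rlp, the pullback of a weak equivalence along a fibration is a weak equivalence: given any pullback square with sides w : B ⟶ Y in W and p : X ⟶ Y in Fib, the induced morphism Q ⟶ X opposite w lies in W (right properness). -/

import Mathlib

open CategoryTheory CategoryTheory.Limits

/-!
Since `w` is a weak equivalence there is some `r : Y ⟶ B`. The coprojection `X ⟶ X ⨿ X` is
split by the codiagonal, so the fibration `p` lifts against it; lifting the square whose bottom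
edge is `p` on the first summand and `p ≫ r ≫ w` on the second gives `s : X ⟶ X` with
`s ≫ p = p ≫ r ≫ w`. Then `(s, p ≫ r)` factors through the pullback `Q`.
-/

universe v u

section Preliminaries

variable {C : Type u} [Category.{v} C]

/-- The right lifting class of a class of morphisms. -/
def MorphismPropertyRLP (S : MorphismProperty C) : MorphismProperty C :=
  fun _ _ g => ∀ ⦃A B : C⦄ (f : A ⟶ B), S f → HasLiftingProperty f g

/-- A category has splitting coproducts if every morphism into a binary coproduct
is, up to isomorphism, a coproduct of two morphisms. -/
def HasSplittingCoproducts (C : Type u) [Category.{v} C] [HasBinaryCoproducts C] : Prop :=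
  ∀ ⦃X A B : C⦄ (f : X ⟶ A ⨿ B), ∃ (XL XR : C) (fL : XL ⟶ A) (fR : XR ⟶ B)
    (φ : XL ⨿ XR ≅ X), φ.hom ≫ f = coprod.map fL fR

end Preliminaries

variable {C : Type u} [Category.{v} C]

instance isSplitMono_coprod_inl_self (A : C) [HasBinaryCoproduct A A] :
    IsSplitMono (coprod.inl : A ⟶ A ⨿ A) :=
  IsSplitMono.mk' ⟨codiag A, coprod.inl_desc _ _⟩

theorem exists_comp_eq_of_hasLiftingProperty_coprod_inl {A X Y : C} [HasBinaryCoproduct A A]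
    (p : X ⟶ Y) [HasLiftingProperty (coprod.inl : A ⟶ A ⨿ A) p] (a : A ⟶ X) (g : A ⟶ Y) :
    ∃ s : A ⟶ X, s ≫ p = g := by
  have sq : CommSq a coprod.inl p (coprod.desc (a ≫ p) g) := ⟨(coprod.inl_desc _ _).symm⟩
  exact ⟨coprod.inr ≫ sq.lift, by rw [Category.assoc, sq.fac_right, coprod.inr_desc]⟩

/-- In a finitely bicomplete category with splitting and disjoint coproducts, the
generalized cocore model structure is right proper: the pullback of a weak
equivalence along a fibration is a weak equivalence. -/
theorem generalizedCocore_rightProper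
    {C : Type u} [Category.{v} C] [HasFiniteLimits C] [HasFiniteColimits C]
    (hsplit : HasSplittingCoproducts C) [∀ A B : C, BinaryCoproductDisjoint A B]
    (W Fib : MorphismProperty C)
    (hW : W = fun A B _ => Nonempty (B ⟶ A))
    (hFib : Fib = MorphismPropertyRLP (fun _ _ f => IsSplitMono f)) :
    ∀ ⦃Q X B Y : C⦄ (q : Q ⟶ X) (w' : Q ⟶ B) (p : X ⟶ Y) (w : B ⟶ Y),
      IsPullback q w' p w → W w → Fib p → W q := by
  subst hW hFib
  rintro Q X B Y q w' p w hpb ⟨r⟩ hp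
  have := hp (coprod.inl : X ⟶ X ⨿ X) inferInstance
  obtain ⟨s, hs⟩ := exists_comp_eq_of_hasLiftingProperty_coprod_inl p (𝟙 X) (p ≫ r ≫ w)
  exact ⟨hpb.lift s (p ≫ r) (by rw [hs, Category.assoc])⟩
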